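/- For every kite pseudo effect algebra K^{λ,ρ}_I(G), the map sending ⟨fⱼ : j ∈ I⟩ ∈ (G⁺)^I to (0, (fⱼ)) and ⟨aᵢ⁻¹ : i ∈ I⟩ ∈ (G⁻)^I to (1, (aᵢ⁻¹)) is an isomorphism of pseudo effect algebras from K^{λ,ρ}_I(G) onto Γ(W, u), where W = ℤ × G^I with the kite loop multiplication and u = (1, constant e). Hence every kite pseudo effect algebra is an interval in a unital po-loop. -/

import Mathlib

/-- A pseudo effect algebra: a partial algebra `(E; +, 0, 1)` where the partial
operation is modeled as `add : E → E → Option E` (`none` = undefined). -/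
structure PseudoEffectAlgebra (E : Type*) where
  add : E → E → Option E
  zero : E
  one : E
  /-- (i): `a+b` and `(a+b)+c` exist iff `b+c` and `a+(b+c)` exist, and then they are equal. -/
  assoc : ∀ a b c : E, (add a b).bind (fun x => add x c) = (add b c).bind (fun x => add a x)
  /-- (ii): there is exactly one `d` with `a + d = 1`. -/
  rcompl : ∀ a : E, ∃! d, add a d = some one
  /-- (ii): there is exactly one `e` with `e + a = 1`. -/
  lcompl : ∀ a : E, ∃! e', add e' a = some one
  /-- (iii): if `a+b` exists, then `a+b = d+a = b+e` for some `d, e`. -/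
  exch : ∀ a b s : E, add a b = some s → (∃ d, add d a = some s) ∧ (∃ e', add b e' = some s)
  /-- (iv): if `1+a` exists then `a = 0`. -/
  one_add : ∀ a : E, (add one a).isSome → a = zero
  /-- (iv): if `a+1` exists then `a = 0`. -/
  add_one : ∀ a : E, (add a one).isSome → a = zero

open Classical in
/-- The universe of the kite: the disjoint union `(G⁺)^I ⊎ (G⁻)^I`. -/
def Kite (G : Type*) [Group G] [PartialOrder G] (I : Type*) : Type _ :=
  (I → {g : G // 1 ≤ g}) ⊕ (I → {g : G // g ≤ 1})

open Classical in
/-- The kite partial addition (rules (I)–(IV)); elements of the upper part `(G⁻)^I`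
are the tuples `⟨aᵢ⁻¹ : i ∈ I⟩`, stored via their values `aᵢ⁻¹ ∈ G⁻`. -/
noncomputable def kiteAdd {G : Type*} [Group G] [PartialOrder G]
    [CovariantClass G G (· * ·) (· ≤ ·)]
    [CovariantClass G G (Function.swap (· * ·)) (· ≤ ·)]
    {I : Type*} (l r : Equiv.Perm I) :
    Kite G I → Kite G I → Option (Kite G I)
  | Sum.inr _, Sum.inr _ => none                                      -- rule (I)
  | Sum.inr a, Sum.inl f =>                                           -- rule (II)
      if h : ∀ i, (f (r.symm i) : G) ≤ ((a i : G))⁻¹ then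
        some (Sum.inr (fun i => ⟨(a i : G) * (f (r.symm i) : G), by
          have := mul_le_mul_right (h i) ((a i : G))
          simpa using this⟩))
      else none
  | Sum.inl f, Sum.inr a =>                                           -- rule (III)
      if h : ∀ i, (f (l.symm i) : G) ≤ ((a i : G))⁻¹ then
        some (Sum.inr (fun i => ⟨(f (l.symm i) : G) * (a i : G), by
          have := mul_le_mul_left (h i) ((a i : G))
          simpa using this⟩))
      else none
  | Sum.inl f, Sum.inl g =>                                           -- rule (IV)
      some (Sum.inl (fun j => ⟨(f j : G) * (g j : G), one_le_mul (f j).2 (g j).2⟩))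
/-- The kite loop multiplication on `W = ℤ × G^I`:
`(m₁, x) * (m₂, y) = (m₁+m₂, i ↦ x_{λ^{-m₂}(i)} · y_{ρ^{-m₁}(i)})`. -/
def kmul {G I : Type*} [Group G] (l r : Equiv.Perm I) :
    ℤ × (I → G) → ℤ × (I → G) → ℤ × (I → G) :=
  fun p q =>
    (p.1 + q.1, fun i => p.2 ((l ^ (-q.1) : Equiv.Perm I) i) * q.2 ((r ^ (-p.1) : Equiv.Perm I) i))

/-- The identity element `(0, constant e)` of the kite loop. -/
def kone (G I : Type*) [Group G] : ℤ × (I → G) := (0, fun _ => 1)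

/-- The lexicographic order on `W = ℤ × G^I` (coordinatewise order on `G^I`). -/
def wle {G I : Type*} [PartialOrder G] (a b : ℤ × (I → G)) : Prop :=
  a.1 < b.1 ∨ (a.1 = b.1 ∧ ∀ i, a.2 i ≤ b.2 i)

/-! The lower part `(G⁺)^I` of the kite sits at level `0` of `W = ℤ × G^I` and the upper part
`(G⁻)^I` at level `1`. At level `0` the loop multiplication is the coordinatewise product
(rule (IV)); between levels `0` and `1` the powers `λ^{-1} = λ.symm`, `ρ^{-1} = ρ.symm` appear and
reproduce rules (II) and (III), where `φ(x) * φ(y) ≤ u` reads `fᵢ · aᵢ⁻¹ ≤ e`, i.e. the kite's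
definedness condition `fᵢ ≤ aᵢ`; two elements of level `1` multiply to level `2`, which is never
below `u` (rule (I)). -/

section KiteLoop

variable {G I : Type*}

section Kmul

variable [Group G] (l r : Equiv.Perm I)

@[simp]
theorem kmul_zero_zero (x y : I → G) : kmul l r (0, x) (0, y) = (0, fun i => x i * y i) := by
  simp [kmul]

@[simp]
theorem kmul_zero_one (x y : I → G) :
    kmul l r (0, x) (1, y) = (1, fun i => x (l.symm i) * y i) := by
  simp [kmul, Equiv.Perm.inv_def]

@[simp]
theorem kmul_one_zero (x y : I → G) :
    kmul l r (1, x) (0, y) = (1, fun i => x i * y (r.symm i)) := by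
  simp [kmul, Equiv.Perm.inv_def]

end Kmul

section Order

variable [PartialOrder G]

theorem wle_mk_iff {m : ℤ} {x y : I → G} : wle (m, x) (m, y) ↔ ∀ i, x i ≤ y i := by
  simp [wle]

theorem not_wle_of_fst_lt {a b : ℤ × (I → G)} (h : b.1 < a.1) : ¬ wle a b := by
  rintro (h' | ⟨h', -⟩) <;> omega

end Order

variable [Group G] [PartialOrder G]

namespace Kite

def toLoop : Kite G I → ℤ × (I → G)
  | Sum.inl f => (0, fun j => (f j : G))
  | Sum.inr a => (1, fun i => (a i : G))

theorem toLoop_injective : Function.Injective (toLoop : Kite G I → ℤ × (I → G)) := by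
  rintro (f | a) (g | b) h <;> simp only [toLoop, Prod.mk.injEq] at h
  · exact congrArg Sum.inl (funext fun j => Subtype.ext (congrFun h.2 j))
  · exact absurd h.1 zero_ne_one
  · exact absurd h.1 one_ne_zero
  · exact congrArg Sum.inr (funext fun i => Subtype.ext (congrFun h.2 i))

theorem range_toLoop :
    Set.range (toLoop : Kite G I → ℤ × (I → G)) = {w | wle (kone G I) w ∧ wle w (1, 1)} := by
  ext ⟨m, x⟩
  constructor
  · rintro ⟨f | a, h⟩ <;> simp only [toLoop, Prod.mk.injEq] at h <;> obtain ⟨rfl, rfl⟩ := h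
    · exact ⟨wle_mk_iff.2 fun i => (f i).2, Or.inl zero_lt_one⟩
    · exact ⟨Or.inl zero_lt_one, wle_mk_iff.2 fun i => (a i).2⟩
  · rintro ⟨h0 | ⟨h0, hx⟩, h1 | ⟨h1, hx⟩⟩ <;> simp only [kone] at h0 h1
    · omega
    · subst h1
      exact ⟨Sum.inr fun i => ⟨x i, hx i⟩, rfl⟩
    · subst h0
      exact ⟨Sum.inl fun j => ⟨x j, hx j⟩, rfl⟩
    · omega

theorem wle_toLoop (k : Kite G I) : wle k.toLoop (1, 1) :=
  (range_toLoop.subset ⟨k, rfl⟩).2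

end Kite

variable [CovariantClass G G (· * ·) (· ≤ ·)] [CovariantClass G G (Function.swap (· * ·)) (· ≤ ·)]
  (l r : Equiv.Perm I)

theorem kmul_toLoop_of_kiteAdd_eq_some {x y z : Kite G I} (h : kiteAdd l r x y = some z) :
    kmul l r x.toLoop y.toLoop = z.toLoop := by
  rcases x with f | a <;> rcases y with g | b <;> simp only [kiteAdd] at h <;>
    (try split_ifs at h) <;> cases h <;> simp [Kite.toLoop]

theorem kiteAdd_isSome_of_wle {x y : Kite G I} (h : wle (kmul l r x.toLoop y.toLoop) (1, 1)) :
    (kiteAdd l r x y).isSome := by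
  rcases x with f | a <;> rcases y with g | b <;> simp only [Kite.toLoop] at h
  · rfl
  · rw [kmul_zero_one, wle_mk_iff] at h
    rw [kiteAdd, dif_pos fun i => le_inv_iff_mul_le_one_right.2 (h i)]
    rfl
  · rw [kmul_one_zero, wle_mk_iff] at h
    rw [kiteAdd, dif_pos fun i => le_inv_iff_mul_le_one_left.2 (h i)]
    rfl
  · exact absurd h (not_wle_of_fst_lt (by simp [kmul]))

theorem kiteAdd_eq_some_iff (x y z : Kite G I) :
    kiteAdd l r x y = some z ↔
      wle (kmul l r x.toLoop y.toLoop) (1, 1) ∧ kmul l r x.toLoop y.toLoop = z.toLoop := by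
  refine ⟨fun h => ?_, fun ⟨hle, hz⟩ => ?_⟩
  · rw [kmul_toLoop_of_kiteAdd_eq_some l r h]
    exact ⟨z.wle_toLoop, rfl⟩
  · obtain ⟨w, hw⟩ := Option.isSome_iff_exists.1 (kiteAdd_isSome_of_wle l r hle)
    obtain rfl := Kite.toLoop_injective (hz.symm.trans (kmul_toLoop_of_kiteAdd_eq_some l r hw))
    exact hw

end KiteLoop

/-- **Every kite pseudo effect algebra is an interval in a unital po-loop.**
The map `⟨fⱼ⟩ ↦ (0,(fⱼ))`, `⟨aᵢ⁻¹⟩ ↦ (1,(aᵢ⁻¹))` is an isomorphism of pseudo effect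
algebras from the kite `K^{λ,ρ}_I(G)` onto the interval `Γ(W,u)` of the unital
po-loop `W = ℤ × G^I` (kite loop multiplication, lexicographic order, `u = (1,e)`):
it is a bijection onto `{w : e ≤ w ≤ u}`, and `x + y` is defined and equal to `z` in
the kite iff `φ(x) * φ(y) ≤ u` and `φ(x) * φ(y) = φ(z)`. -/
theorem stmt17 {G : Type*} [Group G] [PartialOrder G]
    [CovariantClass G G (· * ·) (· ≤ ·)]
    [CovariantClass G G (Function.swap (· * ·)) (· ≤ ·)]
    {I : Type*} (l r : Equiv.Perm I) :
    let u : ℤ × (I → G) := ((1 : ℤ), fun _ => (1 : G))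
    let φ : Kite G I → ℤ × (I → G) := fun k =>
      match k with
      | Sum.inl f => ((0 : ℤ), fun j => (f j : G))
      | Sum.inr a => ((1 : ℤ), fun i => (a i : G))
    Function.Injective φ ∧
    Set.range φ = {w | wle (kone G I) w ∧ wle w u} ∧
    ∀ x y z : Kite G I,
      kiteAdd l r x y = some z ↔
        (wle (kmul l r (φ x) (φ y)) u ∧ kmul l r (φ x) (φ y) = φ z) := by
  intro u φ
  have hφ : φ = Kite.toLoop := funext fun k => by cases k <;> rfl
  have hu : u = (1, 1) := rfl
  rw [hφ, hu]
  exact ⟨Kite.toLoop_injective, Kite.range_toLoop, kiteAdd_eq_some_iff l r⟩
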